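/- Algorithm correctness for tropical polynomial preconditioning: given finite reals c_1, ..., c_n (with c_0 = 0), define c'_k as the value at k of the lower convex hull (greatest convex minorant) of the points (j, c_j), j = 0,...,n. Then the min-plus polynomial with coefficients c'_k equals the one with coefficients c_k as functions of x (min_k (c_k + (n-k)x) = min_k (c'_k + (n-k)x)), and the new coefficients satisfy c'_1 − c'_0 ≤ c'_2 − c'_1 ≤ ⋯ ≤ c'_n − c'_{n-1}, so the new polynomial factors into linear factors. -/

import Mathlib

/-!
Every line `k ↦ m - (n - k) x` lying below the points `(k, c_k)` is convex, so it also lies below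
their greatest convex minorant `c'`; taking `m` to be the value of the min-plus polynomial at `x`
shows that replacing `c` by `c'` does not change that value. Once the differences
`d_i = c'_{i+1} - c'_i` are nondecreasing, `c'_k + (n - k) x = ∑_{i<k} d_i + ∑_{k≤i<n} x` is at least
`∑_i min(x, d_i)`, with equality at the threshold `k` where the `d_i` cross `x`.
-/

open Finset

noncomputable def minPlusEval (n : ℕ) (c : ℕ → ℝ) (x : ℝ) : ℝ :=
  (range (n + 1)).inf' nonempty_range_add_one fun k => c k + ((n - k : ℕ) : ℝ) * x

def IsConvexSeq {α : Type*} [AddGroup α] [LE α] (n : ℕ) (d : ℕ → α) : Prop :=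
  ∀ j, j + 2 ≤ n → d (j + 1) - d j ≤ d (j + 2) - d (j + 1)

section Sequences

variable {α : Type*}

theorem IsConvexSeq.monotoneOn_sub [AddGroup α] [Preorder α] {n : ℕ} {d : ℕ → α}
    (hd : IsConvexSeq n d) : MonotoneOn (fun i => d (i + 1) - d i) (Set.Iio n) :=
  monotoneOn_of_le_add_one Set.ordConnected_Iio fun j _ _ hj => hd j hj

theorem isConvexSeq_sub_natSub_mul (n : ℕ) (a x : ℝ) :
    IsConvexSeq n fun j => a - ((n - j : ℕ) : ℝ) * x := by
  intro j hj
  dsimp only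
  rw [Nat.cast_sub (by omega), Nat.cast_sub (by omega), Nat.cast_sub (by omega)]
  push_cast
  exact le_of_eq (by ring)

theorem MonotoneOn.exists_threshold [LinearOrder α] {n : ℕ} {f : ℕ → α}
    (hf : MonotoneOn f (Set.Iio n)) (x : α) :
    ∃ k ≤ n, (∀ i < k, f i < x) ∧ ∀ i, k ≤ i → i < n → x ≤ f i := by
  classical
  have hex : ∃ k, k = n ∨ x ≤ f k := ⟨n, .inl rfl⟩
  refine ⟨Nat.find hex, Nat.find_min' hex (.inl rfl), fun i hi => ?_, fun i hki hin => ?_⟩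
  · exact lt_of_not_ge fun h => Nat.find_min hex hi (.inr h)
  · rcases Nat.find_spec hex with hk | hk
    · omega
    · exact hk.trans (hf (Set.mem_Iio.mpr (by omega)) hin hki)

end Sequences

theorem add_natSub_mul_eq_sum_ite {c : ℕ → ℝ} (hc0 : c 0 = 0) {k n : ℕ} (hk : k ≤ n) (x : ℝ) :
    c k + ((n - k : ℕ) : ℝ) * x = ∑ i ∈ range n, if i < k then c (i + 1) - c i else x := by
  rw [← sum_range_add_sum_Ico _ hk]
  have hlow : ∑ i ∈ range k, (if i < k then c (i + 1) - c i else x) = c k := by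
    rw [sum_congr rfl fun i hi => if_pos (mem_range.mp hi), sum_range_sub, hc0, sub_zero]
  have hhigh : ∑ i ∈ Ico k n, (if i < k then c (i + 1) - c i else x) = ((n - k : ℕ) : ℝ) * x := by
    rw [sum_congr rfl fun i hi => if_neg (not_lt.mpr (mem_Ico.mp hi).1), sum_const,
      Nat.card_Ico, nsmul_eq_mul]
  rw [hlow, hhigh]

section MinPlusEval

variable {n : ℕ} {c c' : ℕ → ℝ} {x : ℝ}

theorem le_minPlusEval_iff {a : ℝ} :
    a ≤ minPlusEval n c x ↔ ∀ k ≤ n, a ≤ c k + ((n - k : ℕ) : ℝ) * x := by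
  simp [minPlusEval]

theorem minPlusEval_le {k : ℕ} (hk : k ≤ n) :
    minPlusEval n c x ≤ c k + ((n - k : ℕ) : ℝ) * x :=
  inf'_le _ (mem_range.mpr (Nat.lt_succ_of_le hk))

theorem minPlusEval_mono (h : ∀ k ≤ n, c' k ≤ c k) : minPlusEval n c' x ≤ minPlusEval n c x :=
  le_minPlusEval_iff.mpr fun k hk => minPlusEval_le hk |>.trans (by gcongr; exact h k hk)

theorem minPlusEval_eq_of_greatest_convex_minorant (hle : ∀ j ≤ n, c' j ≤ c j)
    (hgreatest : ∀ d : ℕ → ℝ, IsConvexSeq n d → (∀ j ≤ n, d j ≤ c j) → ∀ j ≤ n, d j ≤ c' j) :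
    minPlusEval n c x = minPlusEval n c' x := by
  refine le_antisymm (le_minPlusEval_iff.mpr fun k hk => ?_) (minPlusEval_mono hle)
  have hminorant : ∀ j ≤ n, minPlusEval n c x - ((n - j : ℕ) : ℝ) * x ≤ c j :=
    fun j hj => sub_le_iff_le_add.mpr (minPlusEval_le hj)
  have := hgreatest _ (isConvexSeq_sub_natSub_mul n _ x) hminorant k hk
  linarith

theorem minPlusEval_eq_sum_min (hc0 : c 0 = 0)
    (hmono : MonotoneOn (fun i => c (i + 1) - c i) (Set.Iio n)) (x : ℝ) :
    minPlusEval n c x = ∑ i ∈ range n, min x (c (i + 1) - c i) := by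
  refine le_antisymm ?_ (le_minPlusEval_iff.mpr fun k hk => ?_)
  · obtain ⟨k, hk, hbelow, habove⟩ := hmono.exists_threshold x
    refine (minPlusEval_le hk).trans_eq ?_
    rw [add_natSub_mul_eq_sum_ite hc0 hk]
    refine sum_congr rfl fun i hi => ?_
    split_ifs with hik
    · exact (min_eq_right (hbelow i hik).le).symm
    · exact (min_eq_left (habove i (not_lt.mp hik) (mem_range.mp hi))).symm
  · rw [add_natSub_mul_eq_sum_ite hc0 hk]
    refine sum_le_sum fun i _ => ?_
    split_ifs
    · exact min_le_right _ _
    · exact min_le_left _ _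

end MinPlusEval

theorem minplus_convex_hull_preconditioning (n : ℕ) (c c' : ℕ → ℝ)
    (hc'0 : c' 0 = 0)
    (hconv : ∀ j, j + 2 ≤ n → c' (j + 1) - c' j ≤ c' (j + 2) - c' (j + 1))
    (hle : ∀ j ≤ n, c' j ≤ c j)
    (hgreatest : ∀ d : ℕ → ℝ,
      (∀ j, j + 2 ≤ n → d (j + 1) - d j ≤ d (j + 2) - d (j + 1)) →
      (∀ j ≤ n, d j ≤ c j) → ∀ j ≤ n, d j ≤ c' j) :
    (∀ x : ℝ,
        (range (n + 1)).inf' (by simp) (fun k => c k + ((n - k : ℕ) : ℝ) * x)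
          = (range (n + 1)).inf' (by simp) (fun k => c' k + ((n - k : ℕ) : ℝ) * x)) ∧
    (∀ x : ℝ,
        (range (n + 1)).inf' (by simp) (fun k => c k + ((n - k : ℕ) : ℝ) * x)
          = ∑ i ∈ range n, min x (c' (i + 1) - c' i)) := by
  have hhull : ∀ x, minPlusEval n c x = minPlusEval n c' x := fun x =>
    minPlusEval_eq_of_greatest_convex_minorant hle hgreatest
  have hfactor : ∀ x, minPlusEval n c' x = ∑ i ∈ range n, min x (c' (i + 1) - c' i) :=
    minPlusEval_eq_sum_min hc'0 (IsConvexSeq.monotoneOn_sub hconv)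
  exact ⟨hhull, fun x => (hhull x).trans (hfactor x)⟩
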